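/- Let G be a finite group, (H1,H2,H3,H4) an Ingleton offender in G, and N a normal subgroup of G with N ≤ H2. Then (NH1, H2, H3, H4) is also an Ingleton offender, where NH1 is the subgroup product of N and H1. -/

import Mathlib

/-!
Put `K = N ⊔ H₁`. Because `N` is normal and `N ≤ H₂`, Dedekind's law gives `K ⊓ H₂ = N ⊔ (H₁ ⊓ H₂)`,
so `[K : H₁] = [K ⊓ H₂ : H₁ ⊓ H₂]` and the terms `|K|` and `|K ⊓ H₂|` of the Ingleton inequality grow
by the same factor. For `i = 3, 4` the index `[K ⊓ H₂ ⊓ Hᵢ : H₁ ⊓ H₂ ⊓ Hᵢ]` is at most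
`[K ⊓ Hᵢ : H₁ ⊓ Hᵢ]`, so passing from `H₁` to `K` enlarges the right-hand side at least as much as
the left-hand side.
-/

namespace Subgroup

variable {G : Type*} [Group G]

lemma card_eq_card_mul_relIndex {A B : Subgroup G} (h : A ≤ B) :
    Nat.card B = Nat.card A * A.relIndex B := by
  rw [← relIndex_bot_left, ← relIndex_bot_left, relIndex_mul_relIndex _ _ _ bot_le h]

lemma normal_sup_inf_assoc_of_le (N H L : Subgroup G) [N.Normal] (hN : N ≤ L) :
    (N ⊔ H) ⊓ L = N ⊔ (H ⊓ L) := by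
  apply SetLike.coe_injective
  rw [coe_inf, normal_mul, normal_mul, mul_inf_assoc N H L hN]

lemma card_normal_sup_mul_card_inf (N H L : Subgroup G) [N.Normal] (hN : N ≤ L) :
    Nat.card (N ⊔ H : Subgroup G) * Nat.card (H ⊓ L : Subgroup G) =
      Nat.card ((N ⊔ H) ⊓ L : Subgroup G) * Nat.card H := by
  have hNHL : N ⊓ (H ⊓ L) = N ⊓ H := by
    rw [← inf_assoc, inf_right_comm, inf_eq_left.mpr hN]
  rw [normal_sup_inf_assoc_of_le N H L hN,
    card_eq_card_mul_relIndex (le_sup_left : N ≤ N ⊔ H), relIndex_sup_left,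
    card_eq_card_mul_relIndex (le_sup_left : N ≤ N ⊔ (H ⊓ L)), relIndex_sup_left,
    card_eq_card_mul_relIndex (inf_le_right : N ⊓ H ≤ H), inf_relIndex_right,
    card_eq_card_mul_relIndex (inf_le_right : N ⊓ (H ⊓ L) ≤ H ⊓ L), inf_relIndex_right, hNHL]
  ring

lemma inf_relIndex_inf_le_of_le [Finite G] {H K B C : Subgroup G} (hHK : H ≤ K) (hBC : B ≤ C) :
    (H ⊓ B).relIndex (K ⊓ B) ≤ (H ⊓ C).relIndex (K ⊓ C) := by
  have inf_relIndex_inf {X : Subgroup G} : (H ⊓ X).relIndex (K ⊓ X) = H.relIndex (K ⊓ X) := by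
    rw [← inf_relIndex_right H (K ⊓ X), ← inf_assoc, inf_eq_left.mpr hHK]
  rw [inf_relIndex_inf, inf_relIndex_inf]
  exact relIndex_le_of_le_right (inf_le_inf_left K hBC) index_ne_zero_of_finite

lemma card_inf_mul_card_inf_le [Finite G] {H K B C : Subgroup G} (hHK : H ≤ K) (hBC : B ≤ C) :
    Nat.card (K ⊓ B : Subgroup G) * Nat.card (H ⊓ C : Subgroup G) ≤
      Nat.card (K ⊓ C : Subgroup G) * Nat.card (H ⊓ B : Subgroup G) := by
  rw [card_eq_card_mul_relIndex (inf_le_inf_right B hHK),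
    card_eq_card_mul_relIndex (inf_le_inf_right C hHK)]
  calc _ = Nat.card (H ⊓ B : Subgroup G) * Nat.card (H ⊓ C : Subgroup G) *
        (H ⊓ B).relIndex (K ⊓ B) := by ring
    _ ≤ Nat.card (H ⊓ B : Subgroup G) * Nat.card (H ⊓ C : Subgroup G) *
        (H ⊓ C).relIndex (K ⊓ C) := by gcongr; exact inf_relIndex_inf_le_of_le hHK hBC
    _ = _ := by ring

end Subgroup

section Ingleton

variable {G : Type*} [Group G]

open Subgroup

/-- `(A, B, C, D)` is an Ingleton offender when `ingletonLHS A B C D < ingletonRHS A B C D`. -/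
noncomputable def ingletonLHS (A B C D : Subgroup G) : ℕ :=
  Nat.card A * Nat.card B * Nat.card (C ⊓ D : Subgroup G) * Nat.card (A ⊓ B ⊓ C : Subgroup G) *
    Nat.card (A ⊓ B ⊓ D : Subgroup G)

noncomputable def ingletonRHS (A B C D : Subgroup G) : ℕ :=
  Nat.card (A ⊓ B : Subgroup G) * Nat.card (A ⊓ C : Subgroup G) * Nat.card (A ⊓ D : Subgroup G) *
    Nat.card (B ⊓ C : Subgroup G) * Nat.card (B ⊓ D : Subgroup G)

lemma ingletonLHS_mul_le [Finite G] {H K : Subgroup G} (B C D : Subgroup G) (hHK : H ≤ K)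
    (hB : Nat.card K * Nat.card (H ⊓ B : Subgroup G) = Nat.card (K ⊓ B : Subgroup G) * Nat.card H) :
    ingletonLHS K B C D * (Nat.card (H ⊓ B : Subgroup G) * Nat.card (H ⊓ C : Subgroup G) *
        Nat.card (H ⊓ D : Subgroup G)) ≤
      Nat.card (K ⊓ B : Subgroup G) * Nat.card (K ⊓ C : Subgroup G) *
        Nat.card (K ⊓ D : Subgroup G) * ingletonLHS H B C D := by
  have hC := card_inf_mul_card_inf_le hHK (inf_le_right : B ⊓ C ≤ C)
  have hD := card_inf_mul_card_inf_le hHK (inf_le_right : B ⊓ D ≤ D)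
  simp only [← inf_assoc] at hC hD
  unfold ingletonLHS
  calc _ = Nat.card K * Nat.card (H ⊓ B : Subgroup G) * Nat.card B *
        Nat.card (C ⊓ D : Subgroup G) *
        (Nat.card (K ⊓ B ⊓ C : Subgroup G) * Nat.card (H ⊓ C : Subgroup G)) *
        (Nat.card (K ⊓ B ⊓ D : Subgroup G) * Nat.card (H ⊓ D : Subgroup G)) := by ring
    _ ≤ Nat.card (K ⊓ B : Subgroup G) * Nat.card H * Nat.card B *
        Nat.card (C ⊓ D : Subgroup G) *
        (Nat.card (K ⊓ C : Subgroup G) * Nat.card (H ⊓ B ⊓ C : Subgroup G)) *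
        (Nat.card (K ⊓ D : Subgroup G) * Nat.card (H ⊓ B ⊓ D : Subgroup G)) := by
      rw [hB]; gcongr
    _ = _ := by ring

lemma ingletonRHS_mul_eq (H K B C D : Subgroup G) :
    ingletonRHS K B C D * (Nat.card (H ⊓ B : Subgroup G) * Nat.card (H ⊓ C : Subgroup G) *
        Nat.card (H ⊓ D : Subgroup G)) =
      Nat.card (K ⊓ B : Subgroup G) * Nat.card (K ⊓ C : Subgroup G) *
        Nat.card (K ⊓ D : Subgroup G) * ingletonRHS H B C D := by
  unfold ingletonRHS
  ring

end Ingleton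

theorem stmt16 {G : Type*} [Group G] [Finite G] (H1 H2 H3 H4 N : Subgroup G)
    [N.Normal] (hN : N ≤ H2)
    (hoff : Nat.card (H1 : Subgroup G) * Nat.card (H2 : Subgroup G) * Nat.card (H3 ⊓ H4 : Subgroup G) * Nat.card (H1 ⊓ H2 ⊓ H3 : Subgroup G) * Nat.card (H1 ⊓ H2 ⊓ H4 : Subgroup G) < Nat.card (H1 ⊓ H2 : Subgroup G) * Nat.card (H1 ⊓ H3 : Subgroup G) * Nat.card (H1 ⊓ H4 : Subgroup G) * Nat.card (H2 ⊓ H3 : Subgroup G) * Nat.card (H2 ⊓ H4 : Subgroup G)) :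
    Nat.card ((N ⊔ H1) : Subgroup G) * Nat.card (H2 : Subgroup G) * Nat.card (H3 ⊓ H4 : Subgroup G) * Nat.card ((N ⊔ H1) ⊓ H2 ⊓ H3 : Subgroup G) * Nat.card ((N ⊔ H1) ⊓ H2 ⊓ H4 : Subgroup G) < Nat.card ((N ⊔ H1) ⊓ H2 : Subgroup G) * Nat.card ((N ⊔ H1) ⊓ H3 : Subgroup G) * Nat.card ((N ⊔ H1) ⊓ H4 : Subgroup G) * Nat.card (H2 ⊓ H3 : Subgroup G) * Nat.card (H2 ⊓ H4 : Subgroup G) := by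
  change ingletonLHS H1 H2 H3 H4 < ingletonRHS H1 H2 H3 H4 at hoff
  change ingletonLHS (N ⊔ H1) H2 H3 H4 < ingletonRHS (N ⊔ H1) H2 H3 H4
  refine Nat.lt_of_mul_lt_mul_right (a := Nat.card (H1 ⊓ H2 : Subgroup G) *
    Nat.card (H1 ⊓ H3 : Subgroup G) * Nat.card (H1 ⊓ H4 : Subgroup G)) ?_
  calc _ ≤ _ * ingletonLHS H1 H2 H3 H4 :=
        ingletonLHS_mul_le H2 H3 H4 le_sup_right
          (Subgroup.card_normal_sup_mul_card_inf N H1 H2 hN)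
    _ < _ * ingletonRHS H1 H2 H3 H4 :=
        Nat.mul_lt_mul_of_pos_left hoff
          (Nat.mul_pos (Nat.mul_pos Nat.card_pos Nat.card_pos) Nat.card_pos)
    _ = _ := (ingletonRHS_mul_eq H1 (N ⊔ H1) H2 H3 H4).symm
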